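/- Let 2 ≤ q < ∞ and let F be a Banach space having cotype q with constant K. Then for all Banach spaces E_1,…,E_n, every continuous n-linear operator T : E_1 × ⋯ × E_n → F is multiple (q;1,…,1)-summing with constant K^n ‖T‖: for all finite families x_j^{(k)} ∈ E_k, (∑_{j_1,…,j_n} ‖T(x_{j_1}^{(1)},…,x_{j_n}^{(n)})‖^q)^{1/q} ≤ K^n ‖T‖ ∏_{k=1}^n ‖(x_j^{(k)})_j‖_{w,1}. -/

import Mathlib

open scoped BigOperators

noncomputable def weakNorm (𝕜 : Type*) [RCLike 𝕜] {E : Type*} [NormedAddCommGroup E]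
    [NormedSpace 𝕜 E] (p : ℝ) {m : ℕ} (x : Fin m → E) : ℝ :=
  ⨆ φ : {φ : E →L[𝕜] 𝕜 // ‖φ‖ ≤ 1}, (∑ j, ‖φ.1 (x j)‖ ^ p) ^ (1 / p)

def HasCotype (E : Type*) [NormedAddCommGroup E] (q K : ℝ) : Prop :=
  ∀ (n : ℕ) (x : Fin n → E),
    (∑ i, ‖x i‖ ^ q) ^ (1 / q) ≤
      K * (((2 : ℝ) ^ n)⁻¹ *
        ∑ ε : Fin n → Bool, ‖∑ i, (if ε i then x i else -x i)‖ ^ 2) ^ ((1 : ℝ) / 2)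

/-!
Randomize one coordinate at a time. With the other arguments fixed, `T` is linear in the `k`-th
one, so cotype `q` bounds `∑ₐ ‖T(…, x⁽ᵏ⁾ₐ, …)‖^q` by `K^q` times the average over signs of
`‖T(…, ∑ₐ ±x⁽ᵏ⁾ₐ, …)‖^q`; the second moment in the cotype inequality is dominated by the `q`-th
one because `q ≥ 2`. After all `n` coordinates have been randomized, each `‖∑ₐ ±x⁽ᵏ⁾ₐ‖` is at most
the weak `ℓ₁` norm of `x⁽ᵏ⁾`, as one sees by testing against a norming functional.
-/

open Finset Function

section SignedSum

variable {ι E : Type*} [Fintype ι] [AddCommGroup E]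

def signedSum (ε : ι → Bool) (x : ι → E) : E :=
  ∑ i, if ε i then x i else -x i

lemma map_signedSum {F H : Type*} [AddCommGroup F] [FunLike H E F] [AddMonoidHomClass H E F]
    (L : H) (ε : ι → Bool) (x : ι → E) : L (signedSum ε x) = signedSum ε (fun i => L (x i)) := by
  simp only [signedSum, map_sum]
  exact sum_congr rfl fun i _ => by split_ifs <;> simp

lemma norm_signedSum_le {G : Type*} [SeminormedAddCommGroup G] (ε : ι → Bool) (x : ι → G) :
    ‖signedSum ε x‖ ≤ ∑ i, ‖x i‖ :=
  (norm_sum_le _ _).trans_eq <| sum_congr rfl fun i _ => by split_ifs <;> simp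

end SignedSum

section WeakNorm

variable (𝕜 : Type*) [RCLike 𝕜] {E : Type*} [NormedAddCommGroup E] [NormedSpace 𝕜 E]

lemma weakNorm_nonneg (p : ℝ) {m : ℕ} (x : Fin m → E) : 0 ≤ weakNorm 𝕜 p x :=
  Real.iSup_nonneg fun _ =>
    Real.rpow_nonneg (sum_nonneg fun _ _ => Real.rpow_nonneg (norm_nonneg _) _) _

lemma norm_signedSum_le_weakNorm {m : ℕ} (ε : Fin m → Bool) (x : Fin m → E) :
    ‖signedSum ε x‖ ≤ weakNorm 𝕜 1 x := by
  obtain ⟨φ, hφ, hφx⟩ := exists_dual_vector'' 𝕜 (signedSum ε x)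
  have hbdd : BddAbove (Set.range fun ψ : {ψ : E →L[𝕜] 𝕜 // ‖ψ‖ ≤ 1} =>
      (∑ j, ‖ψ.1 (x j)‖ ^ (1 : ℝ)) ^ (1 / (1 : ℝ))) := by
    refine ⟨∑ j, ‖x j‖, ?_⟩
    rintro _ ⟨ψ, rfl⟩
    simp only [Real.rpow_one, div_one]
    exact sum_le_sum fun j _ => (ψ.1.le_of_opNorm_le ψ.2 (x j)).trans_eq (one_mul _)
  calc ‖signedSum ε x‖ = ‖φ (signedSum ε x)‖ := by simp [hφx]
    _ ≤ ∑ j, ‖φ (x j)‖ := by rw [map_signedSum]; exact norm_signedSum_le ε _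
    _ = (∑ j, ‖φ (x j)‖ ^ (1 : ℝ)) ^ (1 / (1 : ℝ)) := by simp
    _ ≤ weakNorm 𝕜 1 x := le_ciSup hbdd ⟨φ, hφ⟩

end WeakNorm

lemma HasCotype.sum_rpow_le {F : Type*} [NormedAddCommGroup F] {q K : ℝ} (hcot : HasCotype F q K)
    (hq : 2 ≤ q) (hK : 0 ≤ K) {m : ℕ} (z : Fin m → F) :
    ∑ i, ‖z i‖ ^ q ≤ K ^ q * (((2 : ℝ) ^ m)⁻¹ * ∑ ε : Fin m → Bool, ‖signedSum ε z‖ ^ q) := by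
  have hq0 : 0 < q := by linarith
  set w : ℝ := ((2 : ℝ) ^ m)⁻¹
  have hw : ∑ _ε : Fin m → Bool, w = 1 := by simp [w]
  set M₂ := ∑ ε : Fin m → Bool, w * ‖signedSum ε z‖ ^ 2
  have hM₂ : 0 ≤ M₂ := by positivity
  have jensen : M₂ ^ (q / 2) ≤ ∑ ε : Fin m → Bool, w * ‖signedSum ε z‖ ^ q := by
    refine (Real.rpow_arith_mean_le_arith_mean_rpow univ _ _ (fun _ _ => by positivity) hw
      (fun _ _ => by positivity) (by linarith)).trans_eq (sum_congr rfl fun ε _ => ?_)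
    rw [← Real.rpow_natCast, ← Real.rpow_mul (norm_nonneg _)]
    ring_nf
  have hcot' : (∑ i, ‖z i‖ ^ q) ^ (1 / q) ≤ K * M₂ ^ (1 / 2 : ℝ) := by
    have h := hcot m z
    rw [mul_sum] at h
    exact h
  calc ∑ i, ‖z i‖ ^ q = ((∑ i, ‖z i‖ ^ q) ^ (1 / q)) ^ q := by
        rw [one_div, Real.rpow_inv_rpow (by positivity) hq0.ne']
    _ ≤ (K * M₂ ^ (1 / 2 : ℝ)) ^ q := by gcongr
    _ = K ^ q * M₂ ^ (q / 2) := by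
        rw [Real.mul_rpow hK (by positivity), ← Real.rpow_mul hM₂]
        ring_nf
    _ ≤ K ^ q * (w * ∑ ε : Fin m → Bool, ‖signedSum ε z‖ ^ q) := by
        rw [mul_sum]; gcongr

lemma Fintype.sum_sum_update {ι : Type*} [Fintype ι] [DecidableEq ι] {π : ι → Type*}
    [∀ i, Fintype (π i)] {M : Type*} [AddCommMonoid M] (k : ι) (g : (∀ i, π i) → M) :
    ∑ j, ∑ a : π k, g (update j k a) = Fintype.card (π k) • ∑ j, g j := by
  let e : Equiv.Perm ((∀ i, π i) × π k) :=
    Involutive.toPerm (fun p => (update p.1 k p.2, p.1 k)) fun p => by simp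
  calc ∑ j, ∑ a : π k, g (update j k a) = ∑ p : (∀ i, π i) × π k, g (e p).1 := by
        rw [Fintype.sum_prod_type]
        rfl
    _ = ∑ p : (∀ i, π i) × π k, g p.1 := Equiv.sum_comp e (fun p => g p.1)
    _ = Fintype.card (π k) • ∑ j, g j := by
        rw [Fintype.sum_prod_type, ← sum_nsmul]
        simp

section SignedSumOn

variable {ι : Type*} [DecidableEq ι] {α E : ι → Type*} [∀ k, Fintype (α k)]
  [∀ k, AddCommGroup (E k)]

def signedSumOn (x : ∀ k, α k → E k) (A : Finset ι) (ε : ∀ k, α k → Bool) (j : ∀ k, α k) :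
    ∀ k, E k :=
  fun k => if k ∈ A then signedSum (ε k) (x k) else x k (j k)

variable (x : ∀ k, α k → E k)

lemma signedSumOn_empty (ε : ∀ k, α k → Bool) (j : ∀ k, α k) :
    signedSumOn x ∅ ε j = fun k => x k (j k) := by
  funext k
  simp [signedSumOn]

lemma signedSumOn_univ [Fintype ι] (ε : ∀ k, α k → Bool) (j : ∀ k, α k) :
    signedSumOn x univ ε j = fun k => signedSum (ε k) (x k) := by
  funext k
  simp [signedSumOn]

lemma signedSumOn_update_of_notMem {A : Finset ι} {k : ι} (hk : k ∉ A) (ε : ∀ k, α k → Bool)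
    (j : ∀ k, α k) (a : α k) :
    signedSumOn x A ε (update j k a) = update (signedSumOn x A ε j) k (x k a) := by
  funext i
  by_cases hi : i = k
  · subst hi; simp [signedSumOn, hk]
  · simp [signedSumOn, hi]

lemma signedSumOn_insert_update (A : Finset ι) (k : ι) (ε : ∀ k, α k → Bool) (j : ∀ k, α k)
    (δ : α k → Bool) :
    signedSumOn x (insert k A) (update ε k δ) j =
      update (signedSumOn x A ε j) k (signedSum δ (x k)) := by
  funext i
  by_cases hi : i = k
  · subst hi; simp [signedSumOn]
  · simp [signedSumOn, hi]

end SignedSumOn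

section Multilinear

variable {R : Type*} [Semiring R] {ι : Type*} [DecidableEq ι] {E : ι → Type*}
  [∀ k, AddCommGroup (E k)] [∀ k, Module R (E k)] {F : Type*} [NormedAddCommGroup F]
  [Module R F] {m : ι → ℕ} {q K : ℝ}

lemma HasCotype.sum_rpow_signedSumOn_update_le (hcot : HasCotype F q K) (hq : 2 ≤ q)
    (hK : 0 ≤ K) (T : MultilinearMap R E F) (x : ∀ k, Fin (m k) → E k) {A : Finset ι} {k : ι}
    (hk : k ∉ A) (ε : ∀ k, Fin (m k) → Bool) (j : ∀ k, Fin (m k)) :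
    ∑ a, ‖T (signedSumOn x A ε (update j k a))‖ ^ q ≤
      K ^ q * (((2 : ℝ) ^ m k)⁻¹ *
        ∑ δ, ‖T (signedSumOn x (insert k A) (update ε k δ) j)‖ ^ q) := by
  have h := hcot.sum_rpow_le hq hK fun a => T.toLinearMap (signedSumOn x A ε j) k (x k a)
  simp only [signedSumOn_update_of_notMem x hk, signedSumOn_insert_update,
    ← MultilinearMap.toLinearMap_apply, map_signedSum]
  exact h

variable [Fintype ι]

noncomputable def signedPowerSum (T : MultilinearMap R E F) (x : ∀ k, Fin (m k) → E k) (q : ℝ)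
    (A : Finset ι) : ℝ :=
  ∑ ε : ∀ k, Fin (m k) → Bool, ∑ j : ∀ k, Fin (m k), ‖T (signedSumOn x A ε j)‖ ^ q

/-- The summand of `signedPowerSum T x q (insert k A)` does not depend on `j k`, whence the factor
`m k`. -/
lemma HasCotype.card_mul_signedPowerSum_le (hcot : HasCotype F q K) (hq : 2 ≤ q) (hK : 0 ≤ K)
    (T : MultilinearMap R E F) (x : ∀ k, Fin (m k) → E k) {A : Finset ι} {k : ι} (hk : k ∉ A) :
    (m k : ℝ) * signedPowerSum T x q A ≤ K ^ q * signedPowerSum T x q (insert k A) := by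
  calc (m k : ℝ) * signedPowerSum T x q A
      = ∑ ε, ∑ j, ∑ a, ‖T (signedSumOn x A ε (update j k a))‖ ^ q := by
        rw [signedPowerSum, mul_sum]
        refine sum_congr rfl fun ε _ => ?_
        simpa using (Fintype.sum_sum_update k fun j => ‖T (signedSumOn x A ε j)‖ ^ q).symm
    _ ≤ ∑ ε, ∑ j, K ^ q * (((2 : ℝ) ^ m k)⁻¹ *
          ∑ δ, ‖T (signedSumOn x (insert k A) (update ε k δ) j)‖ ^ q) := by
        gcongr with ε _ j _
        exact hcot.sum_rpow_signedSumOn_update_le hq hK T x hk ε j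
    _ = K ^ q * (((2 : ℝ) ^ m k)⁻¹ *
          ∑ j, ∑ ε, ∑ δ, ‖T (signedSumOn x (insert k A) (update ε k δ) j)‖ ^ q) := by
        rw [sum_comm]
        simp only [mul_sum]
    _ = K ^ q * signedPowerSum T x q (insert k A) := by
        have hsigns : ∀ j, ∑ ε, ∑ δ, ‖T (signedSumOn x (insert k A) (update ε k δ) j)‖ ^ q =
            (2 : ℝ) ^ m k * ∑ ε, ‖T (signedSumOn x (insert k A) ε j)‖ ^ q := fun j => by
          simpa using Fintype.sum_sum_update (π := fun k => Fin (m k) → Bool) k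
            fun ε => ‖T (signedSumOn x (insert k A) ε j)‖ ^ q
        simp only [hsigns, ← mul_sum]
        rw [signedPowerSum, sum_comm, inv_mul_cancel_left₀ (by positivity)]

lemma HasCotype.prod_card_mul_signedPowerSum_le (hcot : HasCotype F q K) (hq : 2 ≤ q)
    (hK : 0 ≤ K) (T : MultilinearMap R E F) (x : ∀ k, Fin (m k) → E k) (B : Finset ι) :
    (∏ k ∈ B, (m k : ℝ)) * signedPowerSum T x q ∅ ≤ (K ^ q) ^ #B * signedPowerSum T x q B := by
  have hKq : 0 ≤ K ^ q := Real.rpow_nonneg hK q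
  induction B using Finset.induction_on with
  | empty => simp
  | insert k B hk ih =>
    calc (∏ i ∈ insert k B, (m i : ℝ)) * signedPowerSum T x q ∅
        = m k * ((∏ i ∈ B, (m i : ℝ)) * signedPowerSum T x q ∅) := by
          rw [prod_insert hk, mul_assoc]
      _ ≤ m k * ((K ^ q) ^ #B * signedPowerSum T x q B) := by gcongr
      _ = (K ^ q) ^ #B * (m k * signedPowerSum T x q B) := by ring
      _ ≤ (K ^ q) ^ #B * (K ^ q * signedPowerSum T x q (insert k B)) :=
          mul_le_mul_of_nonneg_left (hcot.card_mul_signedPowerSum_le hq hK T x hk) (by positivity)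
      _ = (K ^ q) ^ #(insert k B) * signedPowerSum T x q (insert k B) := by
          rw [card_insert_of_notMem hk, pow_succ, mul_assoc]

lemma signedPowerSum_empty (T : MultilinearMap R E F) (x : ∀ k, Fin (m k) → E k) (q : ℝ) :
    signedPowerSum T x q ∅ = Fintype.card (∀ k, Fin (m k) → Bool) *
      ∑ j : ∀ k, Fin (m k), ‖T (fun k => x k (j k))‖ ^ q := by
  simp [signedPowerSum, signedSumOn_empty]

end Multilinear

lemma norm_apply_signedSumOn_univ_le {𝕜 ι : Type*} [RCLike 𝕜] [Fintype ι] [DecidableEq ι]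
    {E : ι → Type*} [∀ k, NormedAddCommGroup (E k)] [∀ k, NormedSpace 𝕜 (E k)] {F : Type*}
    [NormedAddCommGroup F] [NormedSpace 𝕜 F] {m : ι → ℕ} (T : ContinuousMultilinearMap 𝕜 E F)
    (x : ∀ k, Fin (m k) → E k) (ε : ∀ k, Fin (m k) → Bool) (j : ∀ k, Fin (m k)) :
    ‖T (signedSumOn x univ ε j)‖ ≤ ‖T‖ * ∏ k, weakNorm 𝕜 1 (x k) := by
  refine (T.le_opNorm _).trans ?_
  rw [signedSumOn_univ]
  gcongr with k
  exact norm_signedSum_le_weakNorm 𝕜 (ε k) (x k)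

theorem HasCotype.sum_norm_rpow_le {𝕜 ι : Type*} [RCLike 𝕜] [Fintype ι] [DecidableEq ι]
    {E : ι → Type*} [∀ k, NormedAddCommGroup (E k)] [∀ k, NormedSpace 𝕜 (E k)] {F : Type*}
    [NormedAddCommGroup F] [NormedSpace 𝕜 F] {q K : ℝ} (hcot : HasCotype F q K) (hq : 2 ≤ q)
    (hK : 0 ≤ K) {m : ι → ℕ} (T : ContinuousMultilinearMap 𝕜 E F) (x : ∀ k, Fin (m k) → E k) :
    ∑ j : ∀ k, Fin (m k), ‖T (fun k => x k (j k))‖ ^ q ≤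
      (K ^ q) ^ Fintype.card ι * (‖T‖ * ∏ k, weakNorm 𝕜 1 (x k)) ^ q := by
  set S := ∑ j : ∀ k, Fin (m k), ‖T (fun k => x k (j k))‖ ^ q
  set C := ‖T‖ * ∏ k, weakNorm 𝕜 1 (x k)
  have hC : 0 ≤ C := mul_nonneg (norm_nonneg T) (prod_nonneg fun k _ => weakNorm_nonneg 𝕜 1 _)
  have hKq : 0 ≤ K ^ q := Real.rpow_nonneg hK q
  rcases isEmpty_or_nonempty (∀ k, Fin (m k)) with hj | hj
  · simp only [S, univ_eq_empty, sum_empty]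
    positivity
  set Nε : ℝ := (Fintype.card (∀ k, Fin (m k) → Bool) : ℝ)
  set Nj : ℝ := (Fintype.card (∀ k, Fin (m k)) : ℝ)
  have hN : 0 < Nj * Nε := by simp only [Nj, Nε]; positivity
  have hupper : signedPowerSum T.toMultilinearMap x q univ ≤ Nε * (Nj * C ^ q) := by
    calc signedPowerSum T.toMultilinearMap x q univ ≤ ∑ _ε : ∀ k, Fin (m k) → Bool,
          ∑ _j : ∀ k, Fin (m k), C ^ q := by
          unfold signedPowerSum
          gcongr with ε _ j _
          exact norm_apply_signedSumOn_univ_le T x ε j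
      _ = Nε * (Nj * C ^ q) := by simp [Nε, Nj]
  have h := hcot.prod_card_mul_signedPowerSum_le hq hK T.toMultilinearMap x univ
  simp only [signedPowerSum_empty, ContinuousMultilinearMap.coe_coe, card_univ] at h
  have hprod : ∏ k, (m k : ℝ) = Nj := by simp [Nj]
  refine le_of_mul_le_mul_left ?_ hN
  calc Nj * Nε * S = (∏ k, (m k : ℝ)) * (Nε * S) := by rw [hprod]; ring
    _ ≤ (K ^ q) ^ Fintype.card ι * (Nε * (Nj * C ^ q)) := h.trans (by gcongr)
    _ = Nj * Nε * ((K ^ q) ^ Fintype.card ι * C ^ q) := by ring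

theorem cotype_implies_multiple_summing_with_constant_general (𝕜 : Type*) [RCLike 𝕜] {n : ℕ}
    (E : Fin n → Type*) [∀ k, NormedAddCommGroup (E k)] [∀ k, NormedSpace 𝕜 (E k)]
    (F : Type*) [NormedAddCommGroup F] [NormedSpace 𝕜 F]
    (q K : ℝ) (hq : 2 ≤ q) (hK : 0 ≤ K) (hcot : HasCotype F q K)
    (T : ContinuousMultilinearMap 𝕜 E F) :
    ∀ (m : Fin n → ℕ) (x : ∀ k, Fin (m k) → E k),
      (∑ j : ∀ k, Fin (m k), ‖T (fun k => x k (j k))‖ ^ q) ^ (1 / q) ≤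
        K ^ n * ‖T‖ * ∏ k, weakNorm 𝕜 1 (x k) := by
  intro m x
  have hC : 0 ≤ ‖T‖ * ∏ k, weakNorm 𝕜 1 (x k) :=
    mul_nonneg (norm_nonneg T) (prod_nonneg fun k _ => weakNorm_nonneg 𝕜 1 _)
  have h := hcot.sum_norm_rpow_le hq hK T x
  rw [Fintype.card_fin, Real.rpow_pow_comm hK, ← Real.mul_rpow (by positivity) hC] at h
  rw [mul_assoc, one_div, Real.rpow_inv_le_iff_of_pos (by positivity) (by positivity)
    (by linarith)]
  exact h

/-- **Souza / Pérez-García.** If `F` has cotype `q ∈ [2,∞)` with constant `K`, then every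
continuous `n`-linear operator `T : E 0 × ⋯ × E (n-1) → F` is multiple `(q;1,…,1)`-summing
with constant `K^n ‖T‖`. -/
theorem cotype_implies_multiple_summing_with_constant (𝕜 : Type*) [RCLike 𝕜] {n : ℕ}
    (E : Fin n → Type*) [∀ k, NormedAddCommGroup (E k)] [∀ k, NormedSpace 𝕜 (E k)]
    [∀ k, CompleteSpace (E k)] (F : Type*) [NormedAddCommGroup F] [NormedSpace 𝕜 F]
    [CompleteSpace F] (q K : ℝ) (hq : 2 ≤ q) (hK : 0 ≤ K) (hcot : HasCotype F q K)
    (T : ContinuousMultilinearMap 𝕜 E F) :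
    ∀ (m : Fin n → ℕ) (x : ∀ k, Fin (m k) → E k),
      (∑ j : ∀ k, Fin (m k), ‖T (fun k => x k (j k))‖ ^ q) ^ (1 / q) ≤
        K ^ n * ‖T‖ * ∏ k, weakNorm 𝕜 1 (x k) :=
  cotype_implies_multiple_summing_with_constant_general 𝕜 E F q K hq hK hcot T
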